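/- Let γ be a Livsic-type tensor whose coordinate matrices are all Hermitian: γ(w) = Σ_I e_I ⊗ (γ_I w), where I ranges over the subsets of {0,…,d} of cardinality k+1, e_I is the corresponding wedge of standard basis vectors, and each γ_I ∈ M_n(ℂ) is Hermitian. Suppose V ⊆ ℂ^{d+1} is a real ℂ-subspace of dimension d−k admitting a basis v_0,…,v_{d−k−1} of vectors with real coordinates such that the endomorphism γ(v_0,…,v_{d−k−1}) is a positive definite Hermitian matrix. Then the set X := {[μ] ∈ ℙ(ℂ^{d+1}) : μ ∈ Ď(γ)} is hyperbolic with respect to V: ℙ(V) ∩ X = ∅, and for every real ℂ-subspace U ⊇ V with dim U = d−k+1, every point of X ∩ ℙ(U) is a real point. (Proposition 3.9: a definite Hermitian Livsic-type determinantal representation implies hyperbolicity.) -/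

import Mathlib

/-!
STATEMENT 12 (Proposition 3.9). A definite Hermitian Livsic-type determinantal
representation implies hyperbolicity. Points of `ℙ(ℂ^{d+1})` are modelled by their nonzero
representative vectors and subsets by their cones; `σ` is coordinatewise conjugation, a
point `[μ]` is real iff `σ(μ)` is proportional to `μ`, a subspace `W` is real iff
`σ(W) ⊆ W` (`σ` being an involution).
-/

noncomputable section

open ExteriorAlgebra TensorProduct
open scoped ComplexOrder

/-- `ℂ^{d+1}`. -/
abbrev Ed (d : ℕ) : Type := Fin (d + 1) → ℂ

/-- Coordinatewise complex conjugation `σ`. -/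
def conjE {d : ℕ} (x : Ed d) : Ed d := fun i => (starRingEnd ℂ) (x i)

/-- The wedge product `v 0 ∧ v 1 ∧ ⋯` of a finite family of vectors. -/
def wedgeVecs {d m : ℕ} (v : Fin m → Ed d) : ExteriorAlgebra ℂ (Ed d) :=
  (List.ofFn fun j => ExteriorAlgebra.ι ℂ (v j)).prod

/-- `ω = e₀ ∧ e₁ ∧ ⋯ ∧ e_d`. -/
def omegaTop (d : ℕ) : ExteriorAlgebra ℂ (Ed d) :=
  wedgeVecs (fun i : Fin (d + 1) => (Pi.single i 1 : Ed d))

/-- `e_I = e_{i₁} ∧ ⋯ ∧ e_{i_r}` for `I = {i₁ < ⋯ < i_r}`. -/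
def eWedge {d : ℕ} (I : Finset (Fin (d + 1))) : ExteriorAlgebra ℂ (Ed d) :=
  ((I.sort (· ≤ ·)).map fun i => ExteriorAlgebra.ι ℂ (Pi.single i (1 : ℂ) : Ed d)).prod

/-- Exterior multiplication by `x` tensored with the identity of `ℂⁿ`. -/
def mulTensor {d : ℕ} (n : ℕ) (x : ExteriorAlgebra ℂ (Ed d)) :
    (ExteriorAlgebra ℂ (Ed d)) ⊗[ℂ] (Fin n → ℂ) →ₗ[ℂ]
      (ExteriorAlgebra ℂ (Ed d)) ⊗[ℂ] (Fin n → ℂ) :=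
  TensorProduct.map (LinearMap.mulLeft ℂ x) LinearMap.id

/-!
Let `w ≠ 0` with `μ ∧ γ(w) = 0`, and write `μ = Σ cⱼ vⱼ + t u` with `u` real (`u = 0` when
`μ ∈ V`; otherwise `U = V ⊕ ℂu`). The wedge `v₀ ∧ ⋯ ∧ v_{d-k-1}` with `vⱼ` replaced by `μ` is a
multiple of `μ` on the right, so it kills `γ(w)`. Taking the `ω`-coefficient and pairing with `w`
gives `cⱼ · w*Gw + t · rⱼ = 0`, where `rⱼ` is the same pairing with `vⱼ` replaced by `u`; it is
real because all vectors involved have real coordinates and all `γ_I` are Hermitian. As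
`w*Gw > 0`, every `cⱼ` is a real multiple of `t`, so `μ = t x` with `x` real, and `t ≠ 0`.
-/

open Matrix

theorem ExteriorAlgebra.exists_ιMulti_eq_mul_ι {R M : Type*} [CommRing R] [AddCommGroup M]
    [Module R M] {m : ℕ} (z : Fin m → M) (j : Fin m) :
    ∃ P : ExteriorAlgebra R M, ιMulti R m z = P * ι R (z j) := by
  obtain ⟨m, rfl⟩ := Nat.exists_eq_add_one_of_ne_zero j.pos.ne'
  set σ := Equiv.swap j (Fin.last m)
  have hσ : z ∘ σ ∘ σ = z := by ext; simp [σ]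
  have hsplit : ιMulti R (m + 1) (z ∘ σ) = ιMulti R m (Fin.init (z ∘ σ)) * ι R (z j) := by
    have hlast : (z ∘ σ) (Fin.last m) = z j := by simp [σ]
    have h1 : ι R (z j) = ιMulti R 1 (fun _ => z j) := by simp
    rw [h1, ιMulti_mul_ιMulti, Fin.append_right_eq_snoc, ← hlast, Fin.snoc_init_self]
  refine ⟨(Equiv.Perm.sign σ : ℤ) • ιMulti R m (Fin.init (z ∘ σ)), ?_⟩
  rw [smul_mul_assoc, ← hsplit, ← Units.smul_def, ← AlternatingMap.map_perm, Function.comp_assoc,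
    hσ]

theorem AlternatingMap.map_update_sum_smul_add_smul {R M N ι : Type*} [CommSemiring R]
    [AddCommMonoid M] [Module R M] [AddCommMonoid N] [Module R N] [Fintype ι] [DecidableEq ι]
    (f : M [⋀^ι]→ₗ[R] N) (v : ι → M) (c : ι → R) (t : R) (u : M) (j : ι) :
    f (Function.update v j (∑ i, c i • v i + t • u)) =
      c j • f v + t • f (Function.update v j u) := by
  have hother : ∀ i ≠ j, c i • f (Function.update v j (v i)) = 0 := fun i hij => by
    rw [f.map_update_self v hij.symm, smul_zero]
  rw [f.map_update_add, f.map_update_sum, f.map_update_smul,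
    Finset.sum_eq_single j (fun i _ hij => by rw [f.map_update_smul, hother i hij]) (by simp),
    f.map_update_smul, Function.update_eq_self]

lemma mulTensor_apply {d : ℕ} (n : ℕ) (x : ExteriorAlgebra ℂ (Ed d))
    (t : ExteriorAlgebra ℂ (Ed d) ⊗[ℂ] (Fin n → ℂ)) :
    mulTensor n x t = (x ⊗ₜ[ℂ] (1 : Fin n → ℂ)) * t := by
  induction t with
  | zero => simp
  | tmul a b => simp [mulTensor, Algebra.TensorProduct.tmul_mul_tmul]
  | add s t hs ht => rw [map_add, hs, ht, mul_add]

lemma mulTensor_mul {d : ℕ} (n : ℕ) (x y : ExteriorAlgebra ℂ (Ed d))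
    (t : ExteriorAlgebra ℂ (Ed d) ⊗[ℂ] (Fin n → ℂ)) :
    mulTensor n (x * y) t = mulTensor n x (mulTensor n y t) := by
  simp only [mulTensor_apply, ← mul_assoc, Algebra.TensorProduct.tmul_mul_tmul, one_mul]

lemma mulTensor_add {d : ℕ} (n : ℕ) (x y : ExteriorAlgebra ℂ (Ed d))
    (t : ExteriorAlgebra ℂ (Ed d) ⊗[ℂ] (Fin n → ℂ)) :
    mulTensor n (x + y) t = mulTensor n x t + mulTensor n y t := by
  simp only [mulTensor_apply, add_tmul, add_mul]

lemma mulTensor_smul {d : ℕ} (n : ℕ) (c : ℂ) (x : ExteriorAlgebra ℂ (Ed d))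
    (t : ExteriorAlgebra ℂ (Ed d) ⊗[ℂ] (Fin n → ℂ)) :
    mulTensor n (c • x) t = c • mulTensor n x t := by
  simp only [mulTensor_apply, ← smul_tmul', smul_mul_assoc]

/-- The coefficient of `ω` in an element of the exterior algebra. -/
def topCoeff (d : ℕ) : ExteriorAlgebra ℂ (Ed d) →ₗ[ℂ] ℂ :=
  ExteriorAlgebra.liftAlternating fun m =>
    if h : m = d + 1 then (Pi.basisFun ℂ (Fin (d + 1))).det.domDomCongr (finCongr h.symm) else 0

lemma topCoeff_ιMulti_top {d : ℕ} (y : Fin (d + 1) → Ed d) :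
    topCoeff d (ExteriorAlgebra.ιMulti ℂ (d + 1) y) = (Pi.basisFun ℂ (Fin (d + 1))).det y := by
  rw [topCoeff, ExteriorAlgebra.liftAlternating_apply_ιMulti, dif_pos rfl]
  simp

lemma topCoeff_omegaTop (d : ℕ) : topCoeff d (omegaTop d) = 1 := by
  rw [omegaTop, wedgeVecs, ← ExteriorAlgebra.ιMulti_apply, topCoeff_ιMulti_top]
  convert (Pi.basisFun ℂ (Fin (d + 1))).det_self
  simp

lemma conj_topCoeff_ιMulti {d m : ℕ} {y : Fin m → Ed d} (hy : ∀ i, conjE (y i) = y i) :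
    starRingEnd ℂ (topCoeff d (ExteriorAlgebra.ιMulti ℂ m y)) =
      topCoeff d (ExteriorAlgebra.ιMulti ℂ m y) := by
  by_cases hm : m = d + 1
  · subst hm
    rw [topCoeff_ιMulti_top, Module.Basis.det_apply, RingHom.map_det]
    congr 1
    ext i j
    simpa [conjE, Module.Basis.toMatrix_apply] using congrFun (hy j) i
  · rw [topCoeff, ExteriorAlgebra.liftAlternating_apply_ιMulti, dif_neg hm]
    simp

lemma eWedge_eq_ιMulti {d : ℕ} (I : Finset (Fin (d + 1))) :
    eWedge I = ExteriorAlgebra.ιMulti ℂ _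
      (fun i => (Pi.single ((I.sort (· ≤ ·)).get i) 1 : Ed d)) := by
  rw [eWedge, ExteriorAlgebra.ιMulti_apply]
  exact congrArg List.prod (List.ofFn_getElem_eq_map _ _).symm

lemma conjE_single_one {d : ℕ} (i : Fin (d + 1)) :
    conjE (Pi.single i 1 : Ed d) = Pi.single i 1 := by
  ext l
  by_cases h : l = i <;> simp [conjE, h]

lemma conj_star_dotProduct_mulVec_self {n : ℕ} {A : Matrix (Fin n) (Fin n) ℂ}
    (hA : A.IsHermitian) (w : Fin n → ℂ) : starRingEnd ℂ (star w ⬝ᵥ A *ᵥ w) = star w ⬝ᵥ A *ᵥ w :=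
  Complex.conj_eq_iff_im.mpr (hA.im_star_dotProduct_mulVec_self w)

section Livsic

variable {d n : ℕ}

/-- `X ↦ w* Φ(X ∧ T)`, where `Φ : ⋀E ⊗ ℂⁿ → ℂⁿ` reads off the coefficient of `ω`. -/
def topPairing (T : ExteriorAlgebra ℂ (Ed d) ⊗[ℂ] (Fin n → ℂ)) (w : Fin n → ℂ) :
    ExteriorAlgebra ℂ (Ed d) →ₗ[ℂ] ℂ where
  toFun X := star w ⬝ᵥ TensorProduct.lid ℂ _ ((topCoeff d).rTensor _ (mulTensor n X T))
  map_add' X Y := by simp only [mulTensor_add, map_add, dotProduct_add]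
  map_smul' c X := by simp only [mulTensor_smul, map_smul, dotProduct_smul, RingHom.id_apply]

lemma topPairing_apply (T : ExteriorAlgebra ℂ (Ed d) ⊗[ℂ] (Fin n → ℂ)) (w : Fin n → ℂ)
    (X : ExteriorAlgebra ℂ (Ed d)) :
    topPairing T w X =
      star w ⬝ᵥ TensorProduct.lid ℂ _ ((topCoeff d).rTensor _ (mulTensor n X T)) :=
  rfl

lemma topPairing_eq_of_mulTensor_eq {T : ExteriorAlgebra ℂ (Ed d) ⊗[ℂ] (Fin n → ℂ)}
    {X : ExteriorAlgebra ℂ (Ed d)} {y : Fin n → ℂ} (h : mulTensor n X T = omegaTop d ⊗ₜ[ℂ] y)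
    (w : Fin n → ℂ) : topPairing T w X = star w ⬝ᵥ y := by
  simp [topPairing_apply, h, topCoeff_omegaTop]

lemma topPairing_eq_zero_of_mulTensor_eq_zero {T : ExteriorAlgebra ℂ (Ed d) ⊗[ℂ] (Fin n → ℂ)}
    {X : ExteriorAlgebra ℂ (Ed d)} (h : mulTensor n X T = 0) (w : Fin n → ℂ) :
    topPairing T w X = 0 := by
  simp [topPairing_apply, h]

def livsicTensor (S : Finset (Finset (Fin (d + 1))))
    (γmat : Finset (Fin (d + 1)) → Matrix (Fin n) (Fin n) ℂ) (w : Fin n → ℂ) :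
    ExteriorAlgebra ℂ (Ed d) ⊗[ℂ] (Fin n → ℂ) :=
  ∑ I ∈ S, eWedge I ⊗ₜ[ℂ] (γmat I *ᵥ w)

lemma topPairing_livsicTensor (S : Finset (Finset (Fin (d + 1))))
    (γmat : Finset (Fin (d + 1)) → Matrix (Fin n) (Fin n) ℂ) (w : Fin n → ℂ)
    (X : ExteriorAlgebra ℂ (Ed d)) :
    topPairing (livsicTensor S γmat w) w X =
      ∑ I ∈ S, topCoeff d (X * eWedge I) * (star w ⬝ᵥ γmat I *ᵥ w) := by
  simp [topPairing_apply, livsicTensor, mulTensor_apply, Algebra.TensorProduct.tmul_mul_tmul,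
    dotProduct_sum]

lemma conj_topPairing_livsicTensor_ιMulti {S : Finset (Finset (Fin (d + 1)))}
    {γmat : Finset (Fin (d + 1)) → Matrix (Fin n) (Fin n) ℂ}
    (hherm : ∀ I ∈ S, (γmat I).IsHermitian) (w : Fin n → ℂ) {m : ℕ} {y : Fin m → Ed d}
    (hy : ∀ i, conjE (y i) = y i) :
    starRingEnd ℂ (topPairing (livsicTensor S γmat w) w (ExteriorAlgebra.ιMulti ℂ m y)) =
      topPairing (livsicTensor S γmat w) w (ExteriorAlgebra.ιMulti ℂ m y) := by
  rw [topPairing_livsicTensor, map_sum]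
  refine Finset.sum_congr rfl fun I hI => ?_
  rw [map_mul, conj_star_dotProduct_mulVec_self (hherm I hI), eWedge_eq_ιMulti,
    ExteriorAlgebra.ιMulti_mul_ιMulti, conj_topCoeff_ιMulti]
  intro i
  refine Fin.addCases (fun i => ?_) (fun i => ?_) i
  · simp [hy]
  · simp [conjE_single_one]

end Livsic

lemma conjE_smul {d : ℕ} (t : ℂ) (x : Ed d) : conjE (t • x) = starRingEnd ℂ t • conjE x := by
  ext l
  simp [conjE]

lemma exists_ofReal_coeff_eq_mul {d : ℕ} {ι : Type*} [Fintype ι] [DecidableEq ι]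
    (f : Ed d [⋀^ι]→ₗ[ℂ] ℂ) (hf : ∀ y : ι → Ed d, (∀ i, conjE (y i) = y i) →
      starRingEnd ℂ (f y) = f y)
    {v : ι → Ed d} (hv : ∀ i, conjE (v i) = v i) (hpos : 0 < f v)
    {u : Ed d} (hu : conjE u = u) {c : ι → ℂ} {t : ℂ} {j : ι}
    (hzero : f (Function.update v j (∑ i, c i • v i + t • u)) = 0) :
    ∃ s : ℝ, c j = t * s := by
  set g := f v
  set r := f (Function.update v j u)
  have hr : starRingEnd ℂ r = r := hf _ fun i => by
    rcases eq_or_ne i j with rfl | hij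
    · simpa using hu
    · simpa [hij] using hv i
  have hg : (g.re : ℂ) = g :=
    Complex.conj_eq_iff_re.mp (Complex.conj_eq_iff_im.mpr (Complex.pos_iff.mp hpos).2.symm)
  have hlin : c j * g + t * r = 0 := by
    simpa only [f.map_update_sum_smul_add_smul, smul_eq_mul] using hzero
  refine ⟨-(r.re / g.re), ?_⟩
  rw [Complex.ofReal_neg, Complex.ofReal_div, Complex.conj_eq_iff_re.mp hr, hg]
  field_simp [hpos.ne']
  linear_combination hlin

lemma exists_conjE_eq_self_and_eq_smul {d n : ℕ} {S : Finset (Finset (Fin (d + 1)))}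
    {γmat : Finset (Fin (d + 1)) → Matrix (Fin n) (Fin n) ℂ}
    (hherm : ∀ I ∈ S, (γmat I).IsHermitian) {m : ℕ} {v : Fin m → Ed d}
    (hv : ∀ i, conjE (v i) = v i) {w : Fin n → ℂ}
    (hpos : 0 < topPairing (livsicTensor S γmat w) w (ExteriorAlgebra.ιMulti ℂ m v))
    {μ : Ed d} (hμ : mulTensor n (ExteriorAlgebra.ι ℂ μ) (livsicTensor S γmat w) = 0)
    {u : Ed d} (hu : conjE u = u) {c : Fin m → ℂ} {t : ℂ} (hμ_eq : μ = ∑ i, c i • v i + t • u) :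
    ∃ x : Ed d, conjE x = x ∧ μ = t • x := by
  set f := (topPairing (livsicTensor S γmat w) w).compAlternatingMap (ExteriorAlgebra.ιMulti ℂ m)
  have hzero : ∀ j, f (Function.update v j μ) = 0 := fun j => by
    obtain ⟨P, hP⟩ := ExteriorAlgebra.exists_ιMulti_eq_mul_ι (R := ℂ) (Function.update v j μ) j
    rw [Function.update_self] at hP
    have hkill : mulTensor n (ExteriorAlgebra.ιMulti ℂ m (Function.update v j μ))
        (livsicTensor S γmat w) = 0 := by
      rw [hP, mulTensor_mul, hμ, map_zero]
    exact topPairing_eq_zero_of_mulTensor_eq_zero hkill w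
  choose s hs using fun j => exists_ofReal_coeff_eq_mul f
    (fun y hy => conj_topPairing_livsicTensor_ιMulti hherm w hy) hv hpos hu (hμ_eq ▸ hzero j)
  refine ⟨∑ i, (s i : ℂ) • v i + u, ?_, ?_⟩
  · ext l
    have hvl := fun i => congrFun (hv i) l
    have hul := congrFun hu l
    simp only [conjE, Finset.sum_apply, Pi.add_apply, Pi.smul_apply, smul_eq_mul] at hvl hul ⊢
    simp [map_sum, hvl, hul]
  · rw [hμ_eq, smul_add, Finset.smul_sum]
    simp only [hs, smul_smul]

lemma exists_conjE_eq_self_mem_not_mem {d : ℕ} {U V : Submodule ℂ (Ed d)}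
    (hU : ∀ u ∈ U, conjE u ∈ U) (hUV : ¬U ≤ V) : ∃ u ∈ U, u ∉ V ∧ conjE u = u := by
  obtain ⟨u₀, hu₀U, hu₀V⟩ := SetLike.not_le_iff_exists.mp hUV
  set a := u₀ + conjE u₀
  set b := Complex.I • (u₀ - conjE u₀)
  have hu₀ : u₀ = (2⁻¹ : ℂ) • (a - Complex.I • b) := by
    ext l
    simp only [a, b, Pi.smul_apply, Pi.sub_apply, Pi.add_apply, smul_eq_mul]
    linear_combination ((u₀ l - conjE u₀ l) / 2) * Complex.I_mul_I
  by_cases haV : a ∈ V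
  · refine ⟨b, U.smul_mem _ (U.sub_mem hu₀U (hU _ hu₀U)), fun hbV => hu₀V ?_, ?_⟩
    · rw [hu₀]
      exact V.smul_mem _ (V.sub_mem haV (V.smul_mem _ hbV))
    · ext l
      simp [b, conjE]
      ring
  · exact ⟨a, U.add_mem hu₀U (hU _ hu₀U), haV, by ext l; simp [a, conjE, add_comm]⟩

lemma Submodule.sup_span_singleton_eq_of_finrank_eq_succ {K E : Type*} [DivisionRing K]
    [AddCommGroup E] [Module K E] [FiniteDimensional K E] {U V : Submodule K E} (hVU : V ≤ U)
    (hU : Module.finrank K U = Module.finrank K V + 1) {u : E} (huU : u ∈ U) (huV : u ∉ V) :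
    V ⊔ K ∙ u = U := by
  refine Submodule.eq_of_le_of_finrank_le (sup_le hVU ((span_singleton_le_iff_mem u U).mpr huU)) ?_
  have hlt : V < V ⊔ K ∙ u :=
    lt_of_le_of_ne le_sup_left fun h => huV (h ▸ mem_sup_right (mem_span_singleton_self u))
  have := Submodule.finrank_lt_finrank_of_lt hlt
  omega

theorem stmt12_general (d k n : ℕ)
    -- the coordinate matrices `γ_I`, Hermitian for `|I| = k+1`:
    (γmat : Finset (Fin (d + 1)) → Matrix (Fin n) (Fin n) ℂ)
    (hherm : ∀ I : Finset (Fin (d + 1)), I.card = k + 1 → (γmat I).IsHermitian)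
    -- the Livsic-type tensor `γ(w) = Σ_{|I| = k+1} e_I ⊗ (γ_I w)`:
    (γfun : (Fin n → ℂ) → (ExteriorAlgebra ℂ (Ed d)) ⊗[ℂ] (Fin n → ℂ))
    (hγ : ∀ w : Fin n → ℂ, γfun w =
        ∑ I ∈ Finset.univ.filter (fun I : Finset (Fin (d + 1)) => I.card = k + 1),
          eWedge I ⊗ₜ[ℂ] (γmat I).mulVec w)
    -- `V` is a real subspace of dimension `d−k` …
    (V : Submodule ℂ (Ed d))
    (hVdim : Module.finrank ℂ V = d - k)
    -- … with a basis `v₀,…,v_{d−k−1}` of vectors with real coordinates …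
    (v : Fin (d - k) → Ed d)
    (hvreal : ∀ (j : Fin (d - k)) (i : Fin (d + 1)), (starRingEnd ℂ) (v j i) = v j i)
    (hvspan : Submodule.span ℂ (Set.range v) = V)
    -- … such that `γ(v₀,…,v_{d−k−1})` is a positive definite Hermitian matrix:
    (G : Matrix (Fin n) (Fin n) ℂ)
    (hGdef : ∀ w : Fin n → ℂ,
        mulTensor n (wedgeVecs v) (γfun w) = omegaTop d ⊗ₜ[ℂ] G.mulVec w)
    (hGpos : G.PosDef) :
    -- then `X = {[μ] : μ ∈ Ď(γ)}` is hyperbolic with respect to `V`: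
    (∀ μ : Ed d,
        (μ ≠ 0 ∧ ∃ w : Fin n → ℂ, w ≠ 0 ∧ mulTensor n (ExteriorAlgebra.ι ℂ μ) (γfun w) = 0) →
        μ ∉ V) ∧
      ∀ U : Submodule ℂ (Ed d), V ≤ U →
        Module.finrank ℂ U = (d - k) + 1 →
        (∀ u ∈ U, conjE u ∈ U) →
        ∀ μ : Ed d,
          (μ ≠ 0 ∧ ∃ w : Fin n → ℂ, w ≠ 0 ∧
              mulTensor n (ExteriorAlgebra.ι ℂ μ) (γfun w) = 0) →
          μ ∈ U → ∃ c : ℂ, conjE μ = c • μ := by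
  set S := Finset.univ.filter fun I : Finset (Fin (d + 1)) => I.card = k + 1
  obtain rfl : γfun = livsicTensor S γmat := funext hγ
  have hv : ∀ i, conjE (v i) = v i := fun i => funext (hvreal i)
  have hX : ∀ μ : Ed d, (μ ≠ 0 ∧ ∃ w : Fin n → ℂ, w ≠ 0 ∧
      mulTensor n (ExteriorAlgebra.ι ℂ μ) (livsicTensor S γmat w) = 0) →
      ∀ (c : Fin (d - k) → ℂ) (t : ℂ) (u : Ed d), conjE u = u → μ = ∑ i, c i • v i + t • u →
        t ≠ 0 ∧ ∃ x : Ed d, conjE x = x ∧ μ = t • x := by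
    rintro μ ⟨hμ0, w, hw, hμ⟩ c t u hu hμ_eq
    have hpos : 0 < topPairing (livsicTensor S γmat w) w (ExteriorAlgebra.ιMulti ℂ _ v) :=
      (topPairing_eq_of_mulTensor_eq (hGdef w) w).symm ▸ hGpos.dotProduct_mulVec_pos hw
    obtain ⟨x, hx, rfl⟩ := exists_conjE_eq_self_and_eq_smul
      (fun I hI => hherm I (Finset.mem_filter.mp hI).2) hv hpos hμ hu hμ_eq
    exact ⟨by rintro rfl; exact hμ0 (zero_smul _ _), x, hx, rfl⟩
  refine ⟨fun μ hμX hμV => ?_, fun U hVU hUdim hU μ hμX hμU => ?_⟩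
  · obtain ⟨c, hc⟩ := (Submodule.mem_span_range_iff_exists_fun ℂ).mp (hvspan ▸ hμV)
    exact (hX μ hμX c 0 0 (by ext; simp [conjE]) (by simp [hc])).1 rfl
  · obtain ⟨u, huU, huV, hu⟩ := exists_conjE_eq_self_mem_not_mem hU fun hUV => by
      have : Module.finrank ℂ U ≤ Module.finrank ℂ V := Submodule.finrank_mono hUV
      omega
    rw [← Submodule.sup_span_singleton_eq_of_finrank_eq_succ hVU (by rw [hUdim, hVdim]) huU huV,
      ← hvspan] at hμU
    obtain ⟨y, hy, z, hz, rfl⟩ := Submodule.mem_sup.mp hμU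
    obtain ⟨c, rfl⟩ := (Submodule.mem_span_range_iff_exists_fun ℂ).mp hy
    obtain ⟨t, rfl⟩ := Submodule.mem_span_singleton.mp hz
    obtain ⟨ht, x, hx, hμ⟩ := hX _ hμX c t u hu rfl
    exact ⟨starRingEnd ℂ t / t, by rw [hμ, conjE_smul, hx, smul_smul, div_mul_cancel₀ _ ht]⟩

theorem stmt12 (d k n : ℕ) (hd : 1 ≤ d) (hk : k + 1 ≤ d) (hn : 1 ≤ n)
    -- the coordinate matrices `γ_I`, Hermitian for `|I| = k+1`:
    (γmat : Finset (Fin (d + 1)) → Matrix (Fin n) (Fin n) ℂ)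
    (hherm : ∀ I : Finset (Fin (d + 1)), I.card = k + 1 → (γmat I).IsHermitian)
    -- the Livsic-type tensor `γ(w) = Σ_{|I| = k+1} e_I ⊗ (γ_I w)`:
    (γfun : (Fin n → ℂ) → (ExteriorAlgebra ℂ (Ed d)) ⊗[ℂ] (Fin n → ℂ))
    (hγ : ∀ w : Fin n → ℂ, γfun w =
        ∑ I ∈ Finset.univ.filter (fun I : Finset (Fin (d + 1)) => I.card = k + 1),
          eWedge I ⊗ₜ[ℂ] (γmat I).mulVec w)
    -- `V` is a real subspace of dimension `d−k` …
    (V : Submodule ℂ (Ed d)) (hVreal : ∀ x ∈ V, conjE x ∈ V)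
    (hVdim : Module.finrank ℂ V = d - k)
    -- … with a basis `v₀,…,v_{d−k−1}` of vectors with real coordinates …
    (v : Fin (d - k) → Ed d)
    (hvreal : ∀ (j : Fin (d - k)) (i : Fin (d + 1)), (starRingEnd ℂ) (v j i) = v j i)
    (hvspan : Submodule.span ℂ (Set.range v) = V)
    -- … such that `γ(v₀,…,v_{d−k−1})` is a positive definite Hermitian matrix:
    (G : Matrix (Fin n) (Fin n) ℂ)
    (hGdef : ∀ w : Fin n → ℂ,
        mulTensor n (wedgeVecs v) (γfun w) = omegaTop d ⊗ₜ[ℂ] G.mulVec w)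
    (hGpos : G.PosDef) :
    -- then `X = {[μ] : μ ∈ Ď(γ)}` is hyperbolic with respect to `V`:
    (∀ μ : Ed d,
        (μ ≠ 0 ∧ ∃ w : Fin n → ℂ, w ≠ 0 ∧ mulTensor n (ExteriorAlgebra.ι ℂ μ) (γfun w) = 0) →
        μ ∉ V) ∧
      ∀ U : Submodule ℂ (Ed d), V ≤ U →
        Module.finrank ℂ U = (d - k) + 1 →
        (∀ u ∈ U, conjE u ∈ U) →
        ∀ μ : Ed d,
          (μ ≠ 0 ∧ ∃ w : Fin n → ℂ, w ≠ 0 ∧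
              mulTensor n (ExteriorAlgebra.ι ℂ μ) (γfun w) = 0) →
          μ ∈ U → ∃ c : ℂ, conjE μ = c • μ :=
  stmt12_general d k n γmat hherm γfun hγ V hVdim v hvreal hvspan G hGdef hGpos
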